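/- If jobs are indexed in non-increasing Z order (Z_1 ≥ Z_2 ≥ ⋯ ≥ Z_n), then the expected reward function is non-negative and monotone non-decreasing: for all S ⊆ T ⊆ {1,…,n}, 0 ≤ R(S) ≤ R(T). -/

import Mathlib

/-- Expected reward of a subset `S`, sequencing its jobs in increasing index order:
`R(S) = Σ_{j∈S} r_j ∏_{i∈S, i≤j} π_i`. -/
def Rexp {n : ℕ} (pr r : Fin n → ℝ) (S : Finset (Fin n)) : ℝ :=
  ∑ j ∈ S, r j * ∏ i ∈ S.filter (fun i => i ≤ j), pr i

/-!
Split `S` around a new job `k` into the jobs `A` before it and `B` after it. Then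
`R(A ∪ B) = R(A) + π(A) R(B)` and `R(A ∪ {k} ∪ B) = R(A) + π(A) π_k (r_k + R(B))`, where `π(X)` is
the product of the `π_i` over `X`, so inserting `k` does not lower the reward as soon as
`(1 - π_k) R(B) ≤ π_k r_k = (1 - π_k) Z_k`. Every job of `B` has Z-index at most `Z_k`, and peeling
off the first job of `B` inductively gives `R(B) ≤ Z_k (1 - π(B)) ≤ Z_k`.
-/

open Finset

noncomputable def zIndex {n : ℕ} (pr r : Fin n → ℝ) (j : Fin n) : ℝ :=
  pr j * r j / (1 - pr j)

namespace Rexp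

variable {n : ℕ} (pr r : Fin n → ℝ)

lemma nonneg {S : Finset (Fin n)} (hpr : ∀ j ∈ S, 0 ≤ pr j) (hr : ∀ j ∈ S, 0 ≤ r j) :
    0 ≤ Rexp pr r S :=
  sum_nonneg fun j hj => mul_nonneg (hr j hj) (prod_nonneg fun i hi => hpr i (mem_filter.1 hi).1)

lemma union_of_forall_lt {A B : Finset (Fin n)} (hAB : ∀ a ∈ A, ∀ b ∈ B, a < b) :
    Rexp pr r (A ∪ B) = Rexp pr r A + (∏ i ∈ A, pr i) * Rexp pr r B := by
  have hdisj : Disjoint A B :=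
    disjoint_left.2 fun a ha hb => lt_irrefl a (hAB a ha a hb)
  have hA : ∀ j ∈ A, (A ∪ B).filter (· ≤ j) = A.filter (· ≤ j) := by
    intro j hj
    rw [filter_union, filter_false_of_mem fun b hb hbj => (hAB j hj b hb).not_ge hbj,
      union_empty]
  have hB : ∀ j ∈ B, (A ∪ B).filter (· ≤ j) = A ∪ B.filter (· ≤ j) := by
    intro j hj
    rw [filter_union, filter_true_of_mem fun a ha => (hAB a ha j hj).le]
  rw [Rexp, Rexp, Rexp, sum_union hdisj, mul_sum]
  congr 1
  · exact sum_congr rfl fun j hj => by rw [hA j hj]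
  · refine sum_congr rfl fun j hj => ?_
    rw [hB j hj, prod_union (hdisj.mono_right (filter_subset _ _))]
    ring

lemma singleton (k : Fin n) : Rexp pr r {k} = r k * pr k := by
  rw [Rexp, sum_singleton, filter_singleton, if_pos le_rfl, prod_singleton]

lemma insert_of_forall_lt {k : Fin n} {B : Finset (Fin n)} (hkB : ∀ b ∈ B, k < b) :
    Rexp pr r (insert k B) = pr k * (r k + Rexp pr r B) := by
  rw [insert_eq, union_of_forall_lt pr r fun a ha => (mem_singleton.1 ha) ▸ hkB, singleton,
    prod_singleton]
  ring

lemma le_mul_one_sub_prod (z : ℝ) (B : Finset (Fin n)) (hpr : ∀ j ∈ B, 0 ≤ pr j)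
    (hz : ∀ j ∈ B, pr j * r j ≤ z * (1 - pr j)) :
    Rexp pr r B ≤ z * (1 - ∏ i ∈ B, pr i) := by
  induction B using induction_on_min with
  | empty => simp [Rexp]
  | insert k B hkB ih =>
    have hk : k ∉ B := fun h => lt_irrefl k (hkB k h)
    have hpk := hpr k (mem_insert_self k B)
    have hzk := hz k (mem_insert_self k B)
    have ihB := ih (fun j hj => hpr j (mem_insert_of_mem hj))
      (fun j hj => hz j (mem_insert_of_mem hj))
    rw [insert_of_forall_lt pr r hkB, prod_insert hk]
    linarith [mul_le_mul_of_nonneg_left ihB hpk]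

lemma one_sub_mul_le_of_zIndex_le {B : Finset (Fin n)} {k : Fin n} (hpr₀ : ∀ j, 0 ≤ pr j)
    (hpr₁ : ∀ j, pr j < 1) (hrk : 0 ≤ r k) (hZ : ∀ j ∈ B, zIndex pr r j ≤ zIndex pr r k) :
    (1 - pr k) * Rexp pr r B ≤ pr k * r k := by
  have hz : ∀ j ∈ B, pr j * r j ≤ zIndex pr r k * (1 - pr j) := fun j hj =>
    (div_le_iff₀ (sub_pos.2 (hpr₁ j))).1 (hZ j hj)
  have hzk : 0 ≤ zIndex pr r k :=
    div_nonneg (mul_nonneg (hpr₀ k) hrk) (sub_nonneg.2 (hpr₁ k).le)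
  have hPB : 0 ≤ ∏ i ∈ B, pr i := prod_nonneg fun i _ => hpr₀ i
  calc (1 - pr k) * Rexp pr r B
      ≤ (1 - pr k) * zIndex pr r k := by
        gcongr
        · exact sub_nonneg.2 (hpr₁ k).le
        · linarith [le_mul_one_sub_prod pr r _ B (fun j _ => hpr₀ j) hz, mul_nonneg hzk hPB]
    _ = pr k * r k := mul_div_cancel₀ _ (sub_pos.2 (hpr₁ k)).ne'

lemma le_insert {S : Finset (Fin n)} {k : Fin n} (hk : k ∉ S) (hpr₀ : ∀ j, 0 ≤ pr j)
    (hpr₁ : ∀ j, pr j < 1) (hrk : 0 ≤ r k)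
    (hZ : ∀ j ∈ S, k < j → zIndex pr r j ≤ zIndex pr r k) :
    Rexp pr r S ≤ Rexp pr r (insert k S) := by
  set A := S.filter (· < k)
  set B := S.filter (k < ·)
  have hAB : ∀ a ∈ A, ∀ b ∈ B, a < b := fun a ha b hb =>
    (mem_filter.1 ha).2.trans (mem_filter.1 hb).2
  have hAkB : ∀ a ∈ A, ∀ b ∈ insert k B, a < b := fun a ha b hb =>
    (mem_insert.1 hb).elim (fun h => h ▸ (mem_filter.1 ha).2) (hAB a ha b)
  have hS : S = A ∪ B := by
    ext j
    simp only [A, B, mem_union, mem_filter, ← and_or_left]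
    exact ⟨fun hj => ⟨hj, lt_or_gt_of_ne (ne_of_mem_of_not_mem hj hk)⟩, And.left⟩
  have hkS : insert k S = A ∪ insert k B := by
    rw [hS, union_insert]
  have hloss : (1 - pr k) * Rexp pr r B ≤ pr k * r k :=
    one_sub_mul_le_of_zIndex_le pr r hpr₀ hpr₁ hrk fun j hj =>
      hZ j (mem_filter.1 hj).1 (mem_filter.1 hj).2
  have hPA : 0 ≤ ∏ i ∈ A, pr i := prod_nonneg fun i _ => hpr₀ i
  have hRS : Rexp pr r S = Rexp pr r A + (∏ i ∈ A, pr i) * Rexp pr r B := by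
    rw [← union_of_forall_lt pr r hAB, ← hS]
  rw [hRS, hkS, union_of_forall_lt pr r hAkB,
    insert_of_forall_lt pr r fun b hb => (mem_filter.1 hb).2]
  linarith [mul_le_mul_of_nonneg_left hloss hPA]

end Rexp

/-- The expected reward function is non-negative and monotone non-decreasing:
for `S ⊆ T ⊆ {1,…,n}`, `0 ≤ R(S) ≤ R(T)`. -/
theorem Rexp_nonneg_monotone (n : ℕ) (pr r : Fin n → ℝ)
    (hpr : ∀ j, 0 ≤ pr j ∧ pr j < 1) (hr : ∀ j, 0 ≤ r j)
    (hZ : ∀ i j : Fin n, i ≤ j →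
      pr j * r j / (1 - pr j) ≤ pr i * r i / (1 - pr i))
    (S T : Finset (Fin n)) (hST : S ⊆ T) :
    0 ≤ Rexp pr r S ∧ Rexp pr r S ≤ Rexp pr r T := by
  have hmono : Monotone (Rexp pr r) :=
    monotone_iff_forall_le_insert.2 fun S k hk =>
      Rexp.le_insert pr r hk (fun j => (hpr j).1) (fun j => (hpr j).2) (hr k)
        fun j _ hkj => hZ k j hkj.le
  exact ⟨Rexp.nonneg pr r (fun j _ => (hpr j).1) (fun j _ => hr j), hmono hST⟩
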